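/- arXiv:2410.13954 — 2 statements merged into one kernel-verified Lean document; each statement's English description precedes it below -/
import Mathlib

section
/- For every real number x, exp(x) ≤ x + exp(x²). -/
theorem stmt_1 : ∀ x : ℝ, Real.exp x ≤ x + Real.exp (x ^ 2) := by
  intro x
  rcases le_or_gt 0 x with hx | hx
  · -- x ≥ 0 : use exp(x²) ≥ exp x * (1 + x² - x) and exp x * (1 - x) ≤ 1
    have h1 : x ^ 2 - x + 1 ≤ Real.exp (x ^ 2 - x) := Real.add_one_le_exp _
    have h2 : -x + 1 ≤ Real.exp (-x) := Real.add_one_le_exp _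
    have h3 : Real.exp (x ^ 2) = Real.exp x * Real.exp (x ^ 2 - x) := by
      rw [← Real.exp_add]; ring_nf
    have h4 : Real.exp (-x) * Real.exp x = 1 := by
      rw [← Real.exp_add]; simp
    have h5 : (0:ℝ) < Real.exp x := Real.exp_pos x
    have h6 : (0:ℝ) < Real.exp (-x) := Real.exp_pos (-x)
    nlinarith [mul_le_mul_of_nonneg_left h1 h5.le, mul_le_mul_of_nonneg_left h2 h5.le,
      mul_nonneg hx (sub_nonneg.mpr (mul_le_mul_of_nonneg_left h2 h5.le))]
  · rcases le_or_gt (-1) x with hx1 | hx1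
    · -- -1 ≤ x < 0 : exp x ≤ 1/(1-x) ≤ 1 + x + x² ≤ x + exp (x²)
      have h2 : -x + 1 ≤ Real.exp (-x) := Real.add_one_le_exp _
      have h4 : Real.exp (-x) * Real.exp x = 1 := by
        rw [← Real.exp_add]; simp
      have h5 : (0:ℝ) < Real.exp x := Real.exp_pos x
      have h1 : x ^ 2 + 1 ≤ Real.exp (x ^ 2) := Real.add_one_le_exp _
      nlinarith [mul_le_mul_of_nonneg_right h2 h5.le]
    · -- x ≤ -1 : exp x ≤ 1, exp(x²) ≥ 1 + x² ≥ 1 - x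
      have h1 : x ^ 2 + 1 ≤ Real.exp (x ^ 2) := Real.add_one_le_exp _
      have h2 : Real.exp x ≤ 1 := Real.exp_le_one_iff.mpr hx.le
      nlinarith
end

section
/- Let N₂ : [0,∞) → [0,∞) be non-increasing with a ↦ a·N₂(a) non-decreasing. Then for any vectors x, z ∈ ℝ^d with ‖z‖ > ‖x‖, |N₂(‖x + z‖) − N₂(‖x − z‖)| ≤ (‖x‖/‖z‖)·(N₂(‖x + z‖) + N₂(‖x − z‖)). -/
lemma key_aux (N₂ : ℝ → ℝ)
    (hnonneg : ∀ a : ℝ, 0 ≤ a → 0 ≤ N₂ a)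
    (hanti : AntitoneOn N₂ (Set.Ici (0 : ℝ)))
    (hmono : MonotoneOn (fun a => a * N₂ a) (Set.Ici (0 : ℝ)))
    (r R a b : ℝ) (hr : 0 ≤ r) (hrR : r < R)
    (ha1 : R - r ≤ a) (hb2 : b ≤ R + r) (hab : a ≤ b) :
    |N₂ a - N₂ b| ≤ r / R * (N₂ a + N₂ b) := by
  have hR : 0 < R := lt_of_le_of_lt hr hrR
  have ha0 : 0 ≤ a := le_trans (by linarith) ha1
  have hb0 : 0 ≤ b := le_trans ha0 hab
  have hba : N₂ b ≤ N₂ a := hanti ha0 hb0 hab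
  have hNa : 0 ≤ N₂ a := hnonneg a ha0
  have hNb : 0 ≤ N₂ b := hnonneg b hb0
  have h1 : (R - r) * N₂ a ≤ a * N₂ a := mul_le_mul_of_nonneg_right ha1 hNa
  have h2 : a * N₂ a ≤ b * N₂ b := hmono ha0 hb0 hab
  have h3 : b * N₂ b ≤ (R + r) * N₂ b := mul_le_mul_of_nonneg_right hb2 hNb
  have hkey : (R - r) * N₂ a ≤ (R + r) * N₂ b := by linarith
  rw [abs_of_nonneg (by linarith)]
  rw [div_mul_eq_mul_div, le_div_iff₀ hR]
  nlinarith

theorem stmt_3 {d : ℕ} (N₂ : ℝ → ℝ)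
    (hnonneg : ∀ a : ℝ, 0 ≤ a → 0 ≤ N₂ a)
    (hanti : AntitoneOn N₂ (Set.Ici (0 : ℝ)))
    (hmono : MonotoneOn (fun a => a * N₂ a) (Set.Ici (0 : ℝ)))
    (x z : EuclideanSpace ℝ (Fin d)) (h : ‖x‖ < ‖z‖) :
    |N₂ ‖x + z‖ - N₂ ‖x - z‖| ≤ ‖x‖ / ‖z‖ * (N₂ ‖x + z‖ + N₂ ‖x - z‖) := by
  have hx : 0 ≤ ‖x‖ := norm_nonneg x
  have hp1 : ‖z‖ - ‖x‖ ≤ ‖x + z‖ := by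
    have := norm_sub_norm_le z (-x)
    simpa [norm_neg, sub_neg_eq_add, add_comm] using this
  have hp2 : ‖x + z‖ ≤ ‖x‖ + ‖z‖ := norm_add_le x z
  have hm1 : ‖z‖ - ‖x‖ ≤ ‖x - z‖ := by
    have := norm_sub_norm_le z x
    calc ‖z‖ - ‖x‖ ≤ ‖z - x‖ := this
      _ = ‖x - z‖ := norm_sub_rev z x
  have hm2 : ‖x - z‖ ≤ ‖x‖ + ‖z‖ := norm_sub_le x z
  rcases le_total ‖x + z‖ ‖x - z‖ with hab | hab
  · exact key_aux N₂ hnonneg hanti hmono ‖x‖ ‖z‖ _ _ hx h hp1 (by linarith) hab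
  · rw [abs_sub_comm, add_comm (N₂ ‖x + z‖)]
    exact key_aux N₂ hnonneg hanti hmono ‖x‖ ‖z‖ _ _ hx h hm1 (by linarith) hab
end
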